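/- arXiv:0811.3397 — 3 statements merged into one kernel-verified Lean document; each statement's English description precedes it below -/
import Mathlib

section
/- There exists a complex vector bundle monomorphism F₀ : TS² → ℂ² × S² (the trivial rank-2 complex bundle over S²), i.e. a complex-linear bundle map injective on every fiber. -/
noncomputable section

abbrev E3 := EuclideanSpace ℝ (Fin 3)
abbrev S2 := Metric.sphere (0 : E3) 1

/-- The almost complex structure on the tangent planes of `S² ⊂ ℝ³`:
`J_z v = z × v` (cross product). -/
noncomputable def sphereJ (z : S2) (v : E3) : E3 :=
  (EuclideanSpace.equiv (Fin 3) ℝ).symm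
    (crossProduct (EuclideanSpace.equiv (Fin 3) ℝ (z : E3))
      (EuclideanSpace.equiv (Fin 3) ℝ v))

/-! The map `v ↦ v - i (z × v)` from `T_zS² = z^⊥` to `ℂ³` is complex linear because
`J_z² = -1` on `z^⊥` (triple product expansion). Dropping the last coordinate keeps it injective
on `z^⊥`: if `v` and `z × v` both lie on the `e₃`-axis, then `v = t e₃` with `t z₀ = t z₁ = 0`
(from `z × v`) and `t z₂ = 0` (from `v ⊥ z`), so `t = 0` as `z ≠ 0`. -/

open Complex Matrix

theorem map_sub_I_smul_map_eq_I_smul {V W F : Type*} [AddCommGroup V] [AddCommGroup W]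
    [Module ℂ W] [FunLike F V W] [AddMonoidHomClass F V W] (p : F) (J : V → V) {v : V}
    (hv : J (J v) = -v) :
    p (J v) - I • p (J (J v)) = I • (p v - I • p (J v)) := by
  rw [hv, map_neg, smul_sub, smul_smul, I_mul_I, neg_one_smul, smul_neg]
  abel

theorem inner_E3_eq (x y : E3) : inner ℝ x y = x 0 * y 0 + x 1 * y 1 + x 2 * y 2 := by
  simp [PiLp.inner_apply, Fin.sum_univ_three, mul_comm]

def crossCLM (z : E3) : E3 →L[ℝ] E3 :=
  ((EuclideanSpace.equiv (Fin 3) ℝ).symm : (Fin 3 → ℝ) →L[ℝ] E3) ∘L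
    (crossProduct (EuclideanSpace.equiv (Fin 3) ℝ z)).toContinuousLinearMap ∘L
    (EuclideanSpace.equiv (Fin 3) ℝ : E3 →L[ℝ] (Fin 3 → ℝ))

theorem crossCLM_apply (z v : E3) :
    crossCLM z v = WithLp.toLp 2 (z.ofLp ⨯₃ v.ofLp) := rfl

theorem sphereJ_eq_crossCLM (z : S2) (v : E3) : sphereJ z v = crossCLM z v := rfl

theorem continuous_crossCLM : Continuous crossCLM :=
  continuous_clm_apply.2 fun v =>
    (((EuclideanSpace.equiv (Fin 3) ℝ).symm : (Fin 3 → ℝ) →L[ℝ] E3).toLinearMap ∘ₗ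
      crossProduct.flip (EuclideanSpace.equiv (Fin 3) ℝ v) ∘ₗ
      (EuclideanSpace.equiv (Fin 3) ℝ : E3 →L[ℝ] (Fin 3 → ℝ)).toLinearMap
      ).continuous_of_finiteDimensional

theorem crossCLM_crossCLM {z v : E3} (hz : ‖z‖ = 1) (hv : inner ℝ z v = 0) :
    crossCLM z (crossCLM z v) = -v := by
  have hzz : z.ofLp ⬝ᵥ z.ofLp = 1 := by
    have h := real_inner_self_eq_norm_sq z
    rw [hz, EuclideanSpace.inner_eq_star_dotProduct] at h
    simpa using h
  have hzv : z.ofLp ⬝ᵥ v.ofLp = 0 := by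
    rw [EuclideanSpace.inner_eq_star_dotProduct] at hv
    simpa [dotProduct_comm] using hv
  rw [crossCLM_apply, crossCLM_apply, cross_cross_eq_smul_sub_smul', hzz, hzv]
  ext i
  simp

def firstTwoCoords : E3 →L[ℝ] ℂ × ℂ :=
  (ofRealCLM ∘L EuclideanSpace.proj 0).prod (ofRealCLM ∘L EuclideanSpace.proj 1)

def tangentMono (z : E3) : E3 →L[ℝ] ℂ × ℂ :=
  firstTwoCoords - I • firstTwoCoords ∘L crossCLM z

theorem continuous_tangentMono : Continuous tangentMono :=
  continuous_const.sub ((continuous_const.clm_comp continuous_crossCLM).const_smul I)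

theorem tangentMono_crossCLM {z v : E3} (hz : ‖z‖ = 1) (hv : inner ℝ z v = 0) :
    tangentMono z (crossCLM z v) = I • tangentMono z v :=
  map_sub_I_smul_map_eq_I_smul firstTwoCoords (crossCLM z) (crossCLM_crossCLM hz hv)

theorem tangentMono_eq_zero_iff {z v : E3} :
    tangentMono z v = 0 ↔ (v 0 = 0 ∧ crossCLM z v 0 = 0) ∧ v 1 = 0 ∧ crossCLM z v 1 = 0 := by
  simp [tangentMono, firstTwoCoords, Prod.ext_iff, Complex.ext_iff]

theorem eq_zero_of_tangentMono_eq_zero {z v : E3} (hz : ‖z‖ = 1) (hv : inner ℝ z v = 0)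
    (h : tangentMono z v = 0) : v = 0 := by
  have hzz : z 0 ^ 2 + z 1 ^ 2 + z 2 ^ 2 = 1 := by
    have h := real_inner_self_eq_norm_sq z
    rw [inner_E3_eq, hz] at h
    linear_combination h
  have hzv : z 0 * v 0 + z 1 * v 1 + z 2 * v 2 = 0 := (inner_E3_eq z v).symm.trans hv
  obtain ⟨⟨h0, hc0⟩, h1, hc1⟩ := tangentMono_eq_zero_iff.1 h
  have h2 : v 2 = 0 := by
    have hc0 : z 1 * v 2 - z 2 * v 1 = 0 := hc0
    have hc1 : z 2 * v 0 - z 0 * v 2 = 0 := hc1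
    linear_combination (-v 2) * hzz - z 0 * hc1 + z 1 * hc0 + z 2 * hzv
  ext i
  fin_cases i <;> simp [h0, h1, h2]

/-- There exists a complex vector bundle monomorphism `F₀ : TS² → ℂ² × S²`:
a continuous family of real-linear maps on ambient `ℝ³` which, restricted to
each tangent plane `T_zS² = z^⊥`, is complex linear (for the complex structure
`J_z = z × ·` on `T_zS²` and `i` on `ℂ²`) and injective. -/
theorem stmt1 :
    ∃ F : S2 → (E3 →L[ℝ] ℂ × ℂ),
      Continuous F ∧
      (∀ (z : S2) (v : E3), (inner ℝ (z : E3) v : ℝ) = 0 →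
        F z (sphereJ z v) = Complex.I • F z v) ∧
      (∀ (z : S2) (v : E3), (inner ℝ (z : E3) v : ℝ) = 0 →
        F z v = 0 → v = 0) := by
  refine ⟨fun z => tangentMono z, continuous_tangentMono.comp continuous_subtype_val,
    fun z v hv => ?_, fun z v hv => eq_zero_of_tangentMono_eq_zero (norm_eq_of_mem_sphere z) hv⟩
  rw [sphereJ_eq_crossCLM]
  exact tangentMono_crossCLM (norm_eq_of_mem_sphere z) hv
end
end

section
/- Let D : H₁ → H₂ be a bounded surjective Fredholm operator between Hilbert spaces with kernel K, let C ⊂ H₂ be a finite-dimensional subspace serving as a complement to the image of a reference operator, and suppose μ = μ₀ + μ₁ ∈ H₂ with μ₀ ∈ C, μ₁ ∈ C^⊥, annihilates the image of D_t = D + tY for a compact perturbation Y and small t ≠ 0 as in the Neumann-series setup of the paper. Then μ = 0; consequently D_t has dense image and, being Fredholm with closed image, is surjective. -/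
/-!
Split `μ = μ₀ + μ₁` with `μ₀ = π_C μ` and `μ₁ ∈ Cᗮ = range D`; the open mapping theorem provides
preimages with controlled norms. Testing `μ` against `v ∈ ker D` with `π_C (Y v) = μ₀` kills the
`D`-part, so (as `t ≠ 0`) `‖μ₀‖² = ⟪μ₀ - Y v, μ₁⟫` and `‖μ₀‖ ≲ ‖μ₁‖`. Testing against `x` with
`D x = μ₁` gives `‖μ₁‖² = -t ⟪Y x, μ⟫ ≲ |t| ‖μ₁‖²`, so `μ₁ = 0` for small `t`, and then `μ₀ = 0`.
An operator with closed range and trivial annihilator is surjective.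
-/

open Submodule

namespace ContinuousLinearMap

theorem exists_preimage_norm_le_of_isClosed_range {𝕜 E F : Type*} [NontriviallyNormedField 𝕜]
    [NormedAddCommGroup E] [NormedSpace 𝕜 E] [CompleteSpace E]
    [NormedAddCommGroup F] [NormedSpace 𝕜 F] [CompleteSpace F] (f : E →L[𝕜] F)
    (hf : IsClosed (LinearMap.range (f : E →ₗ[𝕜] F) : Set F)) :
    ∃ c > 0, ∀ y ∈ LinearMap.range (f : E →ₗ[𝕜] F), ∃ x, f x = y ∧ ‖x‖ ≤ c * ‖y‖ := by
  have : CompleteSpace (LinearMap.range (f : E →ₗ[𝕜] F)) := hf.completeSpace_coe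
  obtain ⟨c, hc, hpre⟩ := f.rangeRestrict.exists_preimage_norm_le
    (f : E →ₗ[𝕜] F).surjective_rangeRestrict
  refine ⟨c, hc, fun y hy => ?_⟩
  obtain ⟨x, hx, hnorm⟩ := hpre ⟨y, hy⟩
  exact ⟨x, congrArg Subtype.val hx, hnorm⟩

theorem surjective_of_isClosed_range_of_forall_inner_eq_zero
    {𝕜 E F : Type*} [RCLike 𝕜] [NormedAddCommGroup E] [InnerProductSpace 𝕜 E]
    [NormedAddCommGroup F] [InnerProductSpace 𝕜 F] [CompleteSpace F] (f : E →L[𝕜] F)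
    (hf : IsClosed (LinearMap.range (f : E →ₗ[𝕜] F) : Set F))
    (h : ∀ μ : F, (∀ ξ : E, inner 𝕜 (f ξ) μ = 0) → μ = 0) :
    Function.Surjective f := by
  have : CompleteSpace (LinearMap.range (f : E →ₗ[𝕜] F)) := hf.completeSpace_coe
  have hrange : LinearMap.range (f : E →ₗ[𝕜] F) = ⊤ := by
    rw [← orthogonal_eq_bot_iff, eq_bot_iff]
    exact fun μ hμ => (mem_bot 𝕜).2 <| h μ fun ξ => hμ _ (LinearMap.mem_range_self _ ξ)
  exact LinearMap.range_eq_top.1 hrange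

end ContinuousLinearMap

section PerturbedOperator

variable {H₁ H₂ : Type*} [NormedAddCommGroup H₁] [InnerProductSpace ℝ H₁]
  [NormedAddCommGroup H₂] [InnerProductSpace ℝ H₂]
  (D Y : H₁ →L[ℝ] H₂) (C : Submodule ℝ H₂)

theorem exists_ker_lift_norm_le [CompleteSpace H₁] [CompleteSpace C]
    (hL : ∀ m ∈ C, ∃ v ∈ LinearMap.ker (D : H₁ →ₗ[ℝ] H₂), Y v - m ∈ Cᗮ) :
    ∃ c > 0, ∀ m ∈ C, ∃ v ∈ LinearMap.ker (D : H₁ →ₗ[ℝ] H₂), Y v - m ∈ Cᗮ ∧ ‖v‖ ≤ c * ‖m‖ := by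
  have : CompleteSpace (LinearMap.ker (D : H₁ →ₗ[ℝ] H₂)) := D.isClosed_ker.completeSpace_coe
  let L := C.orthogonalProjectionOnto ∘L Y ∘L (LinearMap.ker (D : H₁ →ₗ[ℝ] H₂)).subtypeL
  have hLsurj : Function.Surjective L := by
    intro m
    obtain ⟨v, hv, hw⟩ := hL m m.2
    exact ⟨⟨v, hv⟩, Subtype.ext <| eq_starProjection_of_mem_orthogonal' m.2 hw (by abel)⟩
  obtain ⟨c, hc, hpre⟩ := L.exists_preimage_norm_le hLsurj
  refine ⟨c, hc, fun m hm => ?_⟩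
  obtain ⟨v, hv, hnorm⟩ := hpre ⟨m, hm⟩
  refine ⟨v, v.2, ?_, hnorm⟩
  have : C.starProjection (Y v) = m := congrArg Subtype.val hv
  simpa [this] using C.sub_starProjection_mem_orthogonal (Y v)

variable [C.HasOrthogonalProjection] {t : ℝ} {μ : H₂}

theorem norm_starProjection_le_of_forall_inner_eq_zero {c₁ : ℝ} (hc₁0 : 0 ≤ c₁)
    (hc₁ : ∀ m ∈ C, ∃ v ∈ LinearMap.ker (D : H₁ →ₗ[ℝ] H₂), Y v - m ∈ Cᗮ ∧ ‖v‖ ≤ c₁ * ‖m‖)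
    (ht : t ≠ 0) (hμ : ∀ ξ : H₁, inner ℝ ((D + t • Y) ξ) μ = 0) :
    ‖C.starProjection μ‖ ≤ (‖Y‖ * c₁ + 1) * ‖μ - C.starProjection μ‖ := by
  set μ₀ := C.starProjection μ
  set μ₁ := μ - μ₀
  have hμ₀ : μ₀ ∈ C := C.starProjection_apply_mem μ
  have hμ₁ : μ₁ ∈ Cᗮ := C.sub_starProjection_mem_orthogonal μ
  have hsum : μ = μ₀ + μ₁ := (add_sub_cancel μ₀ μ).symm
  obtain ⟨v, hv, hw, hvnorm⟩ := hc₁ μ₀ hμ₀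
  have hDv : D v = 0 := hv
  have hYv : inner ℝ (Y v) μ = 0 := by
    have := hμ v
    rw [add_apply, smul_apply, hDv, zero_add, real_inner_smul_left] at this
    exact (mul_eq_zero.1 this).resolve_left ht
  have hw₀ : inner ℝ (μ₀ - Y v) μ₀ = 0 :=
    inner_left_of_mem_orthogonal hμ₀ (by simpa using Cᗮ.neg_mem hw)
  have hsq : ‖μ₀‖ ^ 2 = inner ℝ (μ₀ - Y v) μ₁ := by
    calc ‖μ₀‖ ^ 2 = inner ℝ μ₀ μ := by
          rw [hsum, inner_add_right, inner_right_of_mem_orthogonal hμ₀ hμ₁, add_zero,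
            real_inner_self_eq_norm_sq]
      _ = inner ℝ (μ₀ - Y v) μ := by rw [inner_sub_left, hYv, sub_zero]
      _ = inner ℝ (μ₀ - Y v) μ₁ := by rw [hsum, inner_add_right, hw₀, zero_add]
  have hbound : ‖μ₀ - Y v‖ ≤ (‖Y‖ * c₁ + 1) * ‖μ₀‖ := by
    calc ‖μ₀ - Y v‖ ≤ ‖μ₀‖ + ‖Y‖ * ‖v‖ := (norm_sub_le _ _).trans (by gcongr; exact Y.le_opNorm v)
      _ ≤ ‖μ₀‖ + ‖Y‖ * (c₁ * ‖μ₀‖) := by gcongr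
      _ = (‖Y‖ * c₁ + 1) * ‖μ₀‖ := by ring
  have hprod : ‖μ₀‖ * ‖μ₀‖ ≤ ‖μ₀‖ * ((‖Y‖ * c₁ + 1) * ‖μ₁‖) := by
    calc ‖μ₀‖ * ‖μ₀‖ = inner ℝ (μ₀ - Y v) μ₁ := by rw [← sq, hsq]
      _ ≤ ‖μ₀ - Y v‖ * ‖μ₁‖ := real_inner_le_norm _ _
      _ ≤ (‖Y‖ * c₁ + 1) * ‖μ₀‖ * ‖μ₁‖ := by gcongr
      _ = ‖μ₀‖ * ((‖Y‖ * c₁ + 1) * ‖μ₁‖) := by ring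
  rcases (norm_nonneg μ₀).eq_or_lt with h | h
  · rw [← h]; positivity
  · exact le_of_mul_le_mul_left hprod h

theorem norm_sub_starProjection_sq_le_of_forall_inner_eq_zero {c : ℝ}
    (hc : ∀ y ∈ Cᗮ, ∃ x, D x = y ∧ ‖x‖ ≤ c * ‖y‖)
    (hμ : ∀ ξ : H₁, inner ℝ ((D + t • Y) ξ) μ = 0) :
    ‖μ - C.starProjection μ‖ ^ 2 ≤ |t| * (c * ‖Y‖) * ‖μ - C.starProjection μ‖ * ‖μ‖ := by
  set μ₁ := μ - C.starProjection μ
  have hμ₁ : μ₁ ∈ Cᗮ := C.sub_starProjection_mem_orthogonal μ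
  obtain ⟨x, hx, hxnorm⟩ := hc μ₁ hμ₁
  have hμ₁μ : inner ℝ μ₁ μ = ‖μ₁‖ ^ 2 := by
    conv_lhs => rw [← sub_add_cancel μ (C.starProjection μ)]
    rw [inner_add_right, inner_left_of_mem_orthogonal (C.starProjection_apply_mem μ) hμ₁,
      add_zero, real_inner_self_eq_norm_sq]
  have hx' := hμ x
  rw [add_apply, smul_apply, hx, inner_add_left, real_inner_smul_left, hμ₁μ] at hx'
  calc ‖μ₁‖ ^ 2 = -(t * inner ℝ (Y x) μ) := by linarith
    _ ≤ |t| * (‖Y x‖ * ‖μ‖) := by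
        calc -(t * inner ℝ (Y x) μ) ≤ |t * inner ℝ (Y x) μ| := neg_le_abs _
          _ = |t| * |inner ℝ (Y x) μ| := abs_mul _ _
          _ ≤ |t| * (‖Y x‖ * ‖μ‖) := by gcongr; exact abs_real_inner_le_norm _ _
    _ ≤ |t| * ((‖Y‖ * (c * ‖μ₁‖)) * ‖μ‖) := by
        gcongr; exact (Y.le_opNorm x).trans (by gcongr)
    _ = |t| * (c * ‖Y‖) * ‖μ₁‖ * ‖μ‖ := by ring

theorem eq_zero_of_forall_inner_add_smul_apply_eq_zero {c c₁ : ℝ} (hc0 : 0 ≤ c)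
    (hc : ∀ y ∈ Cᗮ, ∃ x, D x = y ∧ ‖x‖ ≤ c * ‖y‖) (hc₁0 : 0 ≤ c₁)
    (hc₁ : ∀ m ∈ C, ∃ v ∈ LinearMap.ker (D : H₁ →ₗ[ℝ] H₂), Y v - m ∈ Cᗮ ∧ ‖v‖ ≤ c₁ * ‖m‖)
    (ht : t ≠ 0) (hsmall : |t| * (c * ‖Y‖ * (‖Y‖ * c₁ + 2)) < 1)
    (hμ : ∀ ξ : H₁, inner ℝ ((D + t • Y) ξ) μ = 0) : μ = 0 := by
  have h₀ := norm_starProjection_le_of_forall_inner_eq_zero D Y C hc₁0 hc₁ ht hμ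
  have h₁ := norm_sub_starProjection_sq_le_of_forall_inner_eq_zero D Y C hc hμ
  set a := ‖C.starProjection μ‖
  set b := ‖μ - C.starProjection μ‖
  have hμle : ‖μ‖ ≤ (‖Y‖ * c₁ + 2) * b := by
    calc ‖μ‖ = ‖C.starProjection μ + (μ - C.starProjection μ)‖ := by rw [add_sub_cancel]
      _ ≤ a + b := norm_add_le _ _
      _ ≤ (‖Y‖ * c₁ + 1) * b + b := by gcongr
      _ = (‖Y‖ * c₁ + 2) * b := by ring
  have hb : b = 0 := by
    have : b ^ 2 ≤ (|t| * (c * ‖Y‖ * (‖Y‖ * c₁ + 2))) * b ^ 2 := by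
      calc b ^ 2 ≤ |t| * (c * ‖Y‖) * b * ‖μ‖ := h₁
        _ ≤ |t| * (c * ‖Y‖) * b * ((‖Y‖ * c₁ + 2) * b) := by gcongr
        _ = (|t| * (c * ‖Y‖ * (‖Y‖ * c₁ + 2))) * b ^ 2 := by ring
    by_contra hb
    have hpos : 0 < b ^ 2 := by positivity
    exact (mul_lt_of_lt_one_left hpos hsmall).not_ge this
  have ha : a = 0 := le_antisymm (h₀.trans_eq (by rw [hb, mul_zero])) (norm_nonneg _)
  have hμ₁ : μ - C.starProjection μ = 0 := norm_eq_zero.1 hb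
  rwa [norm_eq_zero.1 ha, sub_zero] at hμ₁

end PerturbedOperator

theorem stmt12_general {H₁ H₂ : Type*}
    [NormedAddCommGroup H₁] [InnerProductSpace ℝ H₁] [CompleteSpace H₁]
    [NormedAddCommGroup H₂] [InnerProductSpace ℝ H₂] [CompleteSpace H₂]
    (D Y : H₁ →L[ℝ] H₂)
    (C : Submodule ℝ H₂) (hCfin : FiniteDimensional ℝ C)
    (hrange : (Cᗮ : Submodule ℝ H₂) = LinearMap.range (D : H₁ →ₗ[ℝ] H₂))
    (hLsurj : ∀ μ₀ ∈ C, ∃ v ∈ LinearMap.ker (D : H₁ →ₗ[ℝ] H₂), Y v - μ₀ ∈ Cᗮ)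
    (hclosed : ∀ t : ℝ,
      IsClosed ((LinearMap.range ((D + t • Y : H₁ →L[ℝ] H₂) : H₁ →ₗ[ℝ] H₂) : Submodule ℝ H₂) : Set H₂)) :
    ∃ t₀ : ℝ, 0 < t₀ ∧ ∀ t : ℝ, t ≠ 0 → |t| < t₀ →
      (∀ μ : H₂, (∀ ξ : H₁, (inner ℝ ((D + t • Y) ξ) μ : ℝ) = 0) → μ = 0) ∧
      Function.Surjective (D + t • Y) := by
  have : CompleteSpace C := FiniteDimensional.complete ℝ C
  obtain ⟨c, hc0, hc⟩ :=
    D.exists_preimage_norm_le_of_isClosed_range (hrange ▸ C.isClosed_orthogonal)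
  rw [← hrange] at hc
  obtain ⟨c₁, hc₁0, hc₁⟩ := exists_ker_lift_norm_le D Y C hLsurj
  set K := c * ‖Y‖ * (‖Y‖ * c₁ + 2)
  refine ⟨1 / (K + 1), by positivity, fun t ht htlt => ?_⟩
  have hsmall : |t| * K < 1 := by
    have := (lt_div_iff₀ (by positivity)).1 htlt
    nlinarith [abs_nonneg t]
  have hμ := fun μ => eq_zero_of_forall_inner_add_smul_apply_eq_zero D Y C (μ := μ)
    hc0.le hc hc₁0.le hc₁ ht hsmall
  exact ⟨hμ, (D + t • Y).surjective_of_isClosed_range_of_forall_inner_eq_zero (hclosed t) hμ⟩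

/-- Surjectivity of the perturbed operator `D_t = D + tY` in the setting of
Lemma `D_st`: `D` is Fredholm with finite-dimensional kernel and cokernel `C`
(realized as a subspace of `H₂` with `C^⊥ = range D`), `Y` is a compact
perturbation such that `π_C ∘ Y` restricted to `ker D` is surjective onto `C`,
and `D_t` has closed range.  Then for all sufficiently small `t ≠ 0`, any
`μ = μ₀ + μ₁` annihilating the image of `D_t` vanishes; consequently `D_t`
has dense image and, being Fredholm with closed image, is surjective. -/
theorem stmt12 {H₁ H₂ : Type*}
    [NormedAddCommGroup H₁] [InnerProductSpace ℝ H₁] [CompleteSpace H₁]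
    [NormedAddCommGroup H₂] [InnerProductSpace ℝ H₂] [CompleteSpace H₂]
    (D Y : H₁ →L[ℝ] H₂)
    (C : Submodule ℝ H₂) (hCfin : FiniteDimensional ℝ C)
    (hKfin : FiniteDimensional ℝ (LinearMap.ker (D : H₁ →ₗ[ℝ] H₂)))
    (hrange : (Cᗮ : Submodule ℝ H₂) = LinearMap.range (D : H₁ →ₗ[ℝ] H₂))
    (hYcompact : IsCompactOperator Y)
    (hLsurj : ∀ μ₀ ∈ C, ∃ v ∈ LinearMap.ker (D : H₁ →ₗ[ℝ] H₂), Y v - μ₀ ∈ Cᗮ)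
    (hclosed : ∀ t : ℝ,
      IsClosed ((LinearMap.range ((D + t • Y : H₁ →L[ℝ] H₂) : H₁ →ₗ[ℝ] H₂) : Submodule ℝ H₂) : Set H₂)) :
    ∃ t₀ : ℝ, 0 < t₀ ∧ ∀ t : ℝ, t ≠ 0 → |t| < t₀ →
      (∀ μ : H₂, (∀ ξ : H₁, (inner ℝ ((D + t • Y) ξ) μ : ℝ) = 0) → μ = 0) ∧
      Function.Surjective (D + t • Y) :=
  stmt12_general D Y C hCfin hrange hLsurj hclosed
end

section
/- Let 𝒜 be the set of injective real-linear maps A : ℂ → ℝ⁴ (where ℝ⁴ carries the standard inner product). There is a well-defined continuous map Φ : 𝒜 → 𝒥 to the space of complex structures on ℝ⁴, assigning to A the unique J ∈ 𝒥 that preserves the splitting ℝ⁴ = V ⊕ W with V = im A and W = V^⊥, makes A complex linear (J ∘ A = A ∘ i), and on an oriented orthonormal basis (e₁, e₂) of W satisfies ⟨Je₁, e₂⟩ = 1 and ⟨Je₁, e₁⟩ = 0; uniqueness holds because a complex structure on a 2-dimensional oriented inner product space compatible with a given orientation is unique. -/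
noncomputable section

abbrev E4 := EuclideanSpace ℝ (Fin 4)

/-!
Write `a = A 1`, `b = A i` and let `d = ‖a‖²‖b‖² - ⟪a, b⟫²` be their Gram determinant, positive
because `A` is injective. The complex structure is written down explicitly as `J = d⁻¹ N + u M`
with `u² d = 1`. Here `N` is `d` times the rotation `a ↦ b`, `b ↦ -a` of `V = span {a, b}`
composed with the orthogonal projection onto `V`, and `M` is the Hodge dual of `a ∧ b` acting on
`ℝ⁴`: it kills `V`, is skew, and `M² = P - d` where `P` is `d` times the projection onto `V`.
Since `N² = -d P` and `N M = M N = 0`, this gives `J² = -1`. On `W = V^⊥` the map `J = u M` is an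
isometric right-angle rotation, the sign of `u` fixing its orientation. Both operators are
polynomial in `A`, so the choice `u = d^(-1/2)` is continuous on injective maps. Uniqueness holds
because `J` is forced on `V` by complex linearity and on `W = span {e₁, e₂}` by `J e₁ = e₂`.
-/

open scoped RealInnerProductSpace

section InnerProductSpace

variable {F : Type*} [NormedAddCommGroup F] [InnerProductSpace ℝ F]

def gramDet (a b : F) : ℝ := ‖a‖ ^ 2 * ‖b‖ ^ 2 - ⟪a, b⟫ ^ 2

theorem gramDet_pos {a b : F} (ha : a ≠ 0) (hab : ∀ r : ℝ, r • a ≠ b) : 0 < gramDet a b := by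
  have hb : b ≠ 0 := fun h => hab 0 (by simp [h])
  have hlt : |⟪a, b⟫| < ‖a‖ * ‖b‖ := by
    refine (abs_real_inner_le_norm a b).lt_of_ne fun h => ?_
    obtain ⟨r, -, rfl⟩ := (norm_inner_eq_norm_iff ha hb).1 (by rwa [Real.norm_eq_abs])
    exact hab r rfl
  have := sq_lt_sq' (neg_lt_of_abs_lt hlt) (lt_of_abs_lt hlt)
  unfold gramDet
  nlinarith

/-- `gramDet a b` times the orthogonal projection onto `span {a, b}`. -/
def gramProj (a b v : F) : F :=
  (‖b‖ ^ 2 * ⟪a, v⟫ - ⟪a, b⟫ * ⟪b, v⟫) • a + (‖a‖ ^ 2 * ⟪b, v⟫ - ⟪a, b⟫ * ⟪a, v⟫) • b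

/-- `gramDet a b` times the rotation `a ↦ b`, `b ↦ -a` of `span {a, b}` composed with the
orthogonal projection onto that plane. -/
def spanRotation (a b : F) : F →L[ℝ] F :=
  (‖b‖ ^ 2 • innerSL ℝ a - ⟪a, b⟫ • innerSL ℝ b).smulRight b -
    (‖a‖ ^ 2 • innerSL ℝ b - ⟪a, b⟫ • innerSL ℝ a).smulRight a

theorem spanRotation_apply (a b v : F) :
    spanRotation a b v =
      (‖b‖ ^ 2 * ⟪a, v⟫ - ⟪a, b⟫ * ⟪b, v⟫) • b - (‖a‖ ^ 2 * ⟪b, v⟫ - ⟪a, b⟫ * ⟪a, v⟫) • a := by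
  simp [spanRotation]

theorem spanRotation_of_inner_eq_zero {a b v : F} (ha : ⟪a, v⟫ = 0) (hb : ⟪b, v⟫ = 0) :
    spanRotation a b v = 0 := by
  simp [spanRotation_apply, ha, hb]

theorem spanRotation_smul_add_smul (a b : F) (r s : ℝ) :
    spanRotation a b (r • a + s • b) = gramDet a b • (r • b - s • a) := by
  simp only [spanRotation_apply, gramDet, inner_add_right, inner_smul_right,
    real_inner_self_eq_norm_sq, real_inner_comm a b]
  module

theorem spanRotation_spanRotation (a b v : F) :
    spanRotation a b (spanRotation a b v) = -gramDet a b • gramProj a b v := by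
  rw [spanRotation_apply a b v, sub_eq_neg_add, ← neg_smul, spanRotation_smul_add_smul, gramProj]
  module

theorem eq_inner_smul_add_inner_smul_of_finrank_eq_two {W : Submodule ℝ F}
    (hW : Module.finrank ℝ W = 2) {e₁ e₂ w : F} (he₁ : e₁ ∈ W) (he₂ : e₂ ∈ W)
    (hon : Orthonormal ℝ ![e₁, e₂]) (hw : w ∈ W) : w = ⟪e₁, w⟫ • e₁ + ⟪e₂, w⟫ • e₂ := by
  have : FiniteDimensional ℝ W := Module.finite_of_finrank_eq_succ hW
  have hspan : Submodule.span ℝ (Set.range ![e₁, e₂]) = W := by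
    refine Submodule.eq_of_le_of_finrank_eq ?_ ?_
    · simp [Submodule.span_le, Set.insert_subset_iff, he₁, he₂]
    · rw [finrank_span_eq_card hon.linearIndependent, hW, Fintype.card_fin]
  obtain ⟨c, rfl⟩ := (Submodule.mem_span_range_iff_exists_fun ℝ).1 (hspan ▸ hw)
  have h₀ := hon.inner_right_fintype c 0
  have h₁ := hon.inner_right_fintype c 1
  simp only [Matrix.cons_val_zero, Matrix.cons_val_one] at h₀ h₁
  rw [h₀, h₁, Fin.sum_univ_two]
  rfl

theorem orthonormal_pair_iff {e₁ e₂ : F} :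
    Orthonormal ℝ ![e₁, e₂] ↔ ‖e₁‖ = 1 ∧ ‖e₂‖ = 1 ∧ ⟪e₁, e₂⟫ = 0 := by
  simp [Orthonormal, Fin.forall_fin_two, Pairwise, real_inner_comm e₁ e₂, and_assoc]

end InnerProductSpace

section R4

theorem E4.inner_eq (x y : E4) : ⟪x, y⟫ = x 0 * y 0 + x 1 * y 1 + x 2 * y 2 + x 3 * y 3 := by
  simp only [EuclideanSpace.inner_eq_star_dotProduct, dotProduct, Pi.star_apply, star_trivial,
    Fin.sum_univ_four]
  ring

theorem E4.norm_sq_eq (x : E4) : ‖x‖ ^ 2 = x 0 ^ 2 + x 1 ^ 2 + x 2 ^ 2 + x 3 ^ 2 := by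
  simp [EuclideanSpace.real_norm_sq_eq, Fin.sum_univ_four]

/-- The skew matrix of the Hodge dual of `a ∧ b`: `⟪perpRotation a b v, w⟫ = det (a, b, w, v)`. -/
def perpRotation (a b : E4) : E4 →L[ℝ] E4 :=
  Matrix.toEuclideanCLM (𝕜 := ℝ) !![
    0, a 2 * b 3 - a 3 * b 2, a 3 * b 1 - a 1 * b 3, a 1 * b 2 - a 2 * b 1;
    a 3 * b 2 - a 2 * b 3, 0, a 0 * b 3 - a 3 * b 0, a 2 * b 0 - a 0 * b 2;
    a 1 * b 3 - a 3 * b 1, a 3 * b 0 - a 0 * b 3, 0, a 0 * b 1 - a 1 * b 0;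
    a 2 * b 1 - a 1 * b 2, a 0 * b 2 - a 2 * b 0, a 1 * b 0 - a 0 * b 1, 0]

theorem continuous_perpRotation : Continuous fun p : E4 × E4 => perpRotation p.1 p.2 := by
  refine (LinearMap.continuous_of_finiteDimensional
    (Matrix.toEuclideanCLM (𝕜 := ℝ) (n := Fin 4)).toAlgEquiv.toLinearMap).comp ?_
  refine continuous_pi fun k => continuous_pi fun l => ?_
  fin_cases k <;> fin_cases l <;>
    simp only [Matrix.of_apply, Matrix.cons_val', Matrix.cons_val, Matrix.cons_val_zero,
      Matrix.cons_val_one, Matrix.cons_val_fin_one, Fin.isValue, Fin.zero_eta, Fin.mk_one,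
      Fin.reduceFinMk] <;>
    fun_prop

variable (a b : E4)

theorem inner_perpRotation_left (v w : E4) :
    ⟪perpRotation a b v, w⟫ = -⟪v, perpRotation a b w⟫ := by
  simp only [E4.inner_eq, perpRotation, Matrix.ofLp_toEuclideanCLM, Matrix.mulVec, dotProduct,
    Matrix.of_apply, Matrix.cons_val', Matrix.cons_val, Matrix.cons_val_zero, Matrix.cons_val_one,
    Matrix.cons_val_fin_one, Fin.sum_univ_four, Fin.isValue]
  ring

theorem perpRotation_smul_add_smul (r s : ℝ) : perpRotation a b (r • a + s • b) = 0 := by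
  ext k
  fin_cases k <;>
    simp only [perpRotation, PiLp.zero_apply, PiLp.add_apply, PiLp.smul_apply, smul_eq_mul,
      Matrix.ofLp_toEuclideanCLM, Matrix.mulVec, dotProduct, Matrix.of_apply, Matrix.cons_val',
      Matrix.cons_val, Matrix.cons_val_zero, Matrix.cons_val_one, Matrix.cons_val_fin_one,
      Fin.sum_univ_four, Fin.isValue, Fin.zero_eta, Fin.mk_one, Fin.reduceFinMk] <;>
    ring

theorem perpRotation_apply_left : perpRotation a b a = 0 := by
  simpa using perpRotation_smul_add_smul a b 1 0

theorem perpRotation_apply_right : perpRotation a b b = 0 := by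
  simpa using perpRotation_smul_add_smul a b 0 1

theorem perpRotation_perpRotation (v : E4) :
    perpRotation a b (perpRotation a b v) = gramProj a b v - gramDet a b • v := by
  ext k
  fin_cases k <;>
    simp only [perpRotation, gramProj, gramDet, E4.inner_eq, E4.norm_sq_eq, PiLp.add_apply,
      PiLp.sub_apply, PiLp.smul_apply, smul_eq_mul, Matrix.ofLp_toEuclideanCLM, Matrix.mulVec,
      dotProduct, Matrix.of_apply, Matrix.cons_val', Matrix.cons_val, Matrix.cons_val_zero,
      Matrix.cons_val_one, Matrix.cons_val_fin_one, Fin.sum_univ_four, Fin.isValue, Fin.zero_eta,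
      Fin.mk_one, Fin.reduceFinMk] <;>
    ring

theorem inner_perpRotation_self (v : E4) : ⟪perpRotation a b v, v⟫ = 0 := by
  linarith [inner_perpRotation_left a b v v, real_inner_comm v (perpRotation a b v)]

theorem inner_left_perpRotation (v : E4) : ⟪a, perpRotation a b v⟫ = 0 := by
  rw [real_inner_comm, inner_perpRotation_left, perpRotation_apply_left, inner_zero_right,
    neg_zero]

theorem inner_right_perpRotation (v : E4) : ⟪b, perpRotation a b v⟫ = 0 := by
  rw [real_inner_comm, inner_perpRotation_left, perpRotation_apply_right, inner_zero_right,
    neg_zero]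

variable {a b}

theorem norm_perpRotation_sq {w : E4} (ha : ⟪a, w⟫ = 0) (hb : ⟪b, w⟫ = 0) :
    ‖perpRotation a b w‖ ^ 2 = gramDet a b * ‖w‖ ^ 2 := by
  rw [← real_inner_self_eq_norm_sq, inner_perpRotation_left, perpRotation_perpRotation]
  simp [gramProj, ha, hb, inner_smul_right]

def complexStructure (a b : E4) (u : ℝ) : E4 →L[ℝ] E4 :=
  (gramDet a b)⁻¹ • spanRotation a b + u • perpRotation a b

variable {u : ℝ}

theorem complexStructure_apply (v : E4) :
    complexStructure a b u v = (gramDet a b)⁻¹ • spanRotation a b v + u • perpRotation a b v :=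
  rfl

theorem complexStructure_smul_add_smul (hd : gramDet a b ≠ 0) (r s : ℝ) :
    complexStructure a b u (r • a + s • b) = r • b - s • a := by
  rw [complexStructure_apply, spanRotation_smul_add_smul, perpRotation_smul_add_smul, smul_zero,
    add_zero, smul_smul, inv_mul_cancel₀ hd, one_smul]

theorem complexStructure_of_inner_eq_zero {w : E4} (ha : ⟪a, w⟫ = 0) (hb : ⟪b, w⟫ = 0) :
    complexStructure a b u w = u • perpRotation a b w := by
  rw [complexStructure_apply, spanRotation_of_inner_eq_zero ha hb, smul_zero, zero_add]

theorem complexStructure_complexStructure (hu : u ^ 2 * gramDet a b = 1) (v : E4) :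
    complexStructure a b u (complexStructure a b u v) = -v := by
  have hNM : spanRotation a b (perpRotation a b v) = 0 :=
    spanRotation_of_inner_eq_zero (inner_left_perpRotation a b v) (inner_right_perpRotation a b v)
  have hMN : perpRotation a b (spanRotation a b v) = 0 := by
    rw [spanRotation_apply, sub_eq_neg_add, ← neg_smul, perpRotation_smul_add_smul]
  have hu' : u ^ 2 = (gramDet a b)⁻¹ := eq_inv_of_mul_eq_one_left hu
  have ht : (gramDet a b)⁻¹ * gramDet a b = 1 := hu' ▸ hu
  simp only [complexStructure_apply, map_add, map_smul, hNM, hMN, spanRotation_spanRotation,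
    perpRotation_perpRotation, smul_zero, add_zero, zero_add, smul_smul, ← sq, hu']
  linear_combination (norm := module) ht • -((gramDet a b)⁻¹ • gramProj a b v + v)

variable {w : E4}

theorem inner_left_complexStructure (ha : ⟪a, w⟫ = 0) (hb : ⟪b, w⟫ = 0) :
    ⟪a, complexStructure a b u w⟫ = 0 := by
  rw [complexStructure_of_inner_eq_zero ha hb, inner_smul_right, inner_left_perpRotation, mul_zero]

theorem inner_right_complexStructure (ha : ⟪a, w⟫ = 0) (hb : ⟪b, w⟫ = 0) :
    ⟪b, complexStructure a b u w⟫ = 0 := by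
  rw [complexStructure_of_inner_eq_zero ha hb, inner_smul_right, inner_right_perpRotation, mul_zero]

theorem inner_complexStructure_self (ha : ⟪a, w⟫ = 0) (hb : ⟪b, w⟫ = 0) :
    ⟪complexStructure a b u w, w⟫ = 0 := by
  rw [complexStructure_of_inner_eq_zero ha hb, inner_smul_left, inner_perpRotation_self, mul_zero]

theorem norm_complexStructure (hu : u ^ 2 * gramDet a b = 1) (ha : ⟪a, w⟫ = 0) (hb : ⟪b, w⟫ = 0) :
    ‖complexStructure a b u w‖ = ‖w‖ := by
  rw [← sq_eq_sq₀ (norm_nonneg _) (norm_nonneg _), complexStructure_of_inner_eq_zero ha hb,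
    norm_smul, mul_pow, Real.norm_eq_abs, sq_abs, norm_perpRotation_sq ha hb, ← mul_assoc, hu,
    one_mul]

end R4

section ComplexDomain

variable {F : Type*} [NormedAddCommGroup F] [InnerProductSpace ℝ F]

theorem apply_eq_re_smul_add_im_smul {M G : Type*} [AddCommGroup M] [Module ℝ M] [FunLike G ℂ M]
    [LinearMapClass G ℝ ℂ M] (A : G) (z : ℂ) : A z = z.re • A 1 + z.im • A Complex.I := by
  have hz : z = z.re • (1 : ℂ) + z.im • Complex.I := by simp
  conv_lhs => rw [hz]
  rw [map_add, map_smul, map_smul]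

theorem mem_orthogonal_range_iff (A : ℂ →L[ℝ] F) (v : F) :
    v ∈ (LinearMap.range (A : ℂ →ₗ[ℝ] F))ᗮ ↔ ⟪A 1, v⟫ = 0 ∧ ⟪A Complex.I, v⟫ = 0 := by
  rw [Submodule.mem_orthogonal]
  refine ⟨fun h => ⟨h _ ⟨1, rfl⟩, h _ ⟨Complex.I, rfl⟩⟩, ?_⟩
  rintro ⟨h₁, hI⟩ _ ⟨z, rfl⟩
  change ⟪A z, v⟫ = 0
  rw [apply_eq_re_smul_add_im_smul A z, inner_add_left, real_inner_smul_left,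
    real_inner_smul_left, h₁, hI, mul_zero, mul_zero, add_zero]

theorem gramDet_pos_of_injective {G : Type*} [FunLike G ℂ F] [LinearMapClass G ℝ ℂ F] {A : G}
    (hA : Function.Injective A) :
    0 < gramDet (A 1) (A Complex.I) := by
  refine gramDet_pos (fun h => one_ne_zero (hA (h.trans (map_zero A).symm))) fun r h => ?_
  have := hA (by rw [map_smul, h] : A (r • 1) = A Complex.I)
  simpa using congrArg Complex.im this

theorem finrank_orthogonal_range_add_two [FiniteDimensional ℝ F] {A : ℂ →ₗ[ℝ] F}
    (hA : Function.Injective A) :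
    Module.finrank ℝ (LinearMap.range A)ᗮ + 2 = Module.finrank ℝ F := by
  rw [← (LinearMap.range A).finrank_add_finrank_orthogonal, LinearMap.finrank_range_of_inj hA,
    Complex.finrank_real_complex, add_comm]

structure IsAdaptedComplexStructure (A : ℂ →L[ℝ] F) (J : F →L[ℝ] F) : Prop where
  apply_apply : ∀ v, J (J v) = -v
  mapsTo_range : ∀ v ∈ LinearMap.range (A : ℂ →ₗ[ℝ] F), J v ∈ LinearMap.range (A : ℂ →ₗ[ℝ] F)
  mapsTo_orthogonal :
    ∀ w ∈ (LinearMap.range (A : ℂ →ₗ[ℝ] F))ᗮ, J w ∈ (LinearMap.range (A : ℂ →ₗ[ℝ] F))ᗮ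
  map_I_mul : ∀ z, J (A z) = A (Complex.I * z)

namespace IsAdaptedComplexStructure

variable {A : ℂ →L[ℝ] F} {J K : F →L[ℝ] F} {e₁ e₂ : F}

theorem apply_eq_of_inner (hJ : IsAdaptedComplexStructure A J)
    (hW : Module.finrank ℝ (LinearMap.range (A : ℂ →ₗ[ℝ] F))ᗮ = 2)
    (he₁ : e₁ ∈ (LinearMap.range (A : ℂ →ₗ[ℝ] F))ᗮ) (he₂ : e₂ ∈ (LinearMap.range (A : ℂ →ₗ[ℝ] F))ᗮ)
    (hon : Orthonormal ℝ ![e₁, e₂]) (h₁ : ⟪J e₁, e₂⟫ = 1) (h₀ : ⟪J e₁, e₁⟫ = 0) : J e₁ = e₂ := by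
  have := eq_inner_smul_add_inner_smul_of_finrank_eq_two hW he₁ he₂ hon
    (hJ.mapsTo_orthogonal e₁ he₁)
  rwa [real_inner_comm (J e₁) e₁, h₀, real_inner_comm (J e₁) e₂, h₁, zero_smul, zero_add,
    one_smul] at this

theorem ext_of_apply_eq (hJ : IsAdaptedComplexStructure A J) (hK : IsAdaptedComplexStructure A K)
    (hW : Module.finrank ℝ (LinearMap.range (A : ℂ →ₗ[ℝ] F))ᗮ = 2)
    (he₁ : e₁ ∈ (LinearMap.range (A : ℂ →ₗ[ℝ] F))ᗮ) (he₂ : e₂ ∈ (LinearMap.range (A : ℂ →ₗ[ℝ] F))ᗮ)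
    (hon : Orthonormal ℝ ![e₁, e₂]) (hJe : J e₁ = e₂) (hKe : K e₁ = e₂) : J = K := by
  have hJe₂ : J e₂ = -e₁ := hJe ▸ hJ.apply_apply e₁
  have hKe₂ : K e₂ = -e₁ := hKe ▸ hK.apply_apply e₁
  ext x
  obtain ⟨_, ⟨z, rfl⟩, w, hw, rfl⟩ :=
    Submodule.exists_add_mem_mem_orthogonal (K := LinearMap.range (A : ℂ →ₗ[ℝ] F)) x
  rw [eq_inner_smul_add_inner_smul_of_finrank_eq_two hW he₁ he₂ hon hw]
  simp only [map_add, map_smul, ContinuousLinearMap.coe_coe, hJ.map_I_mul, hK.map_I_mul, hJe, hKe,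
    hJe₂, hKe₂]

end IsAdaptedComplexStructure

end ComplexDomain

section Construction

theorem isAdaptedComplexStructure_complexStructure {A : ℂ →L[ℝ] E4} {u : ℝ}
    (hu : u ^ 2 * gramDet (A 1) (A Complex.I) = 1) :
    IsAdaptedComplexStructure A (complexStructure (A 1) (A Complex.I) u) := by
  have hd : gramDet (A 1) (A Complex.I) ≠ 0 := right_ne_zero_of_mul_eq_one hu
  have hmap (z : ℂ) : complexStructure (A 1) (A Complex.I) u (A z) = A (Complex.I * z) := by
    rw [apply_eq_re_smul_add_im_smul A z, apply_eq_re_smul_add_im_smul A (Complex.I * z),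
      complexStructure_smul_add_smul hd]
    simp only [Complex.mul_re, Complex.mul_im, Complex.I_re, Complex.I_im]
    module
  refine ⟨complexStructure_complexStructure hu, ?_, fun w hw => ?_, hmap⟩
  · rintro _ ⟨z, rfl⟩
    exact ⟨Complex.I * z, (hmap z).symm⟩
  · obtain ⟨ha, hb⟩ := (mem_orthogonal_range_iff _ w).1 hw
    exact (mem_orthogonal_range_iff _ _).2
      ⟨inner_left_complexStructure ha hb, inner_right_complexStructure ha hb⟩

theorem finrank_orthogonal_range_eq_two {A : ℂ →L[ℝ] E4} (hA : Function.Injective A) :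
    Module.finrank ℝ (LinearMap.range (A : ℂ →ₗ[ℝ] E4))ᗮ = 2 := by
  have := finrank_orthogonal_range_add_two (A := (A : ℂ →ₗ[ℝ] E4)) hA
  rw [finrank_euclideanSpace_fin] at this
  omega

theorem inv_sqrt_sq_mul_cancel {d : ℝ} (hd : 0 < d) : (√d)⁻¹ ^ 2 * d = 1 := by
  rw [inv_pow, Real.sq_sqrt hd.le, inv_mul_cancel₀ hd.ne']

theorem exists_complexStructure_apply_eq {A : ℂ →L[ℝ] E4} (hA : Function.Injective A)
    {e₁ e₂ : E4} (he₁ : e₁ ∈ (LinearMap.range (A : ℂ →ₗ[ℝ] E4))ᗮ)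
    (he₂ : e₂ ∈ (LinearMap.range (A : ℂ →ₗ[ℝ] E4))ᗮ)
    (hon : Orthonormal ℝ ![e₁, e₂]) :
    ∃ u : ℝ, u ^ 2 * gramDet (A 1) (A Complex.I) = 1 ∧
      complexStructure (A 1) (A Complex.I) u e₁ = e₂ := by
  obtain ⟨hn₁, hn₂, -⟩ := orthonormal_pair_iff.1 hon
  obtain ⟨ha, hb⟩ := (mem_orthogonal_range_iff _ e₁).1 he₁
  set u₀ := (√(gramDet (A 1) (A Complex.I)))⁻¹
  have hu₀ : u₀ ^ 2 * gramDet (A 1) (A Complex.I) = 1 :=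
    inv_sqrt_sq_mul_cancel (gramDet_pos_of_injective hA)
  -- `J₀ e₁` is a unit vector of `W` orthogonal to `e₁`, so it is `± e₂`; replacing `u₀` by `-u₀`
  -- negates `J₀` on `W`.
  set c := ⟪e₂, complexStructure (A 1) (A Complex.I) u₀ e₁⟫
  have hJ₀ : complexStructure (A 1) (A Complex.I) u₀ e₁ = c • e₂ := by
    have := eq_inner_smul_add_inner_smul_of_finrank_eq_two (finrank_orthogonal_range_eq_two hA)
      he₁ he₂ hon ((isAdaptedComplexStructure_complexStructure hu₀).mapsTo_orthogonal e₁ he₁)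
    rwa [real_inner_comm _ e₁, inner_complexStructure_self ha hb, zero_smul, zero_add] at this
  have hc : c ^ 2 = 1 := by
    have := norm_complexStructure hu₀ ha hb
    rw [hJ₀, norm_smul, hn₁, hn₂, mul_one, Real.norm_eq_abs] at this
    rw [← sq_abs, this, one_pow]
  refine ⟨c * u₀, by rw [mul_pow, mul_assoc, hu₀, hc, one_mul], ?_⟩
  rw [complexStructure_of_inner_eq_zero ha hb, mul_smul, ← complexStructure_of_inner_eq_zero ha hb,
    hJ₀, smul_smul, ← sq, hc, one_smul]

def adaptedComplexStructure (A : ℂ →L[ℝ] E4) : E4 →L[ℝ] E4 :=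
  complexStructure (A 1) (A Complex.I) (√(gramDet (A 1) (A Complex.I)))⁻¹

theorem isAdaptedComplexStructure_adaptedComplexStructure {A : ℂ →L[ℝ] E4}
    (hA : Function.Injective A) : IsAdaptedComplexStructure A (adaptedComplexStructure A) :=
  isAdaptedComplexStructure_complexStructure
    (inv_sqrt_sq_mul_cancel (gramDet_pos_of_injective hA))

theorem continuousOn_adaptedComplexStructure :
    ContinuousOn adaptedComplexStructure {A | Function.Injective A} := by
  have hd : Continuous fun A : ℂ →L[ℝ] E4 => gramDet (A 1) (A Complex.I) := by
    unfold gramDet; fun_prop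
  have hpos (A : ℂ →L[ℝ] E4) (hA : Function.Injective A) : 0 < gramDet (A 1) (A Complex.I) :=
    gramDet_pos_of_injective hA
  refine continuousOn_clm_apply.2 fun v => ?_
  simp only [adaptedComplexStructure, complexStructure_apply, spanRotation_apply]
  have hM : Continuous fun A : ℂ →L[ℝ] E4 => perpRotation (A 1) (A Complex.I) v :=
    (continuous_perpRotation.comp (f := fun A : ℂ →L[ℝ] E4 => (A 1, A Complex.I))
      (by fun_prop)).clm_apply continuous_const
  refine ContinuousOn.add ?_ ?_
  · exact (hd.continuousOn.inv₀ fun A hA => (hpos A hA).ne').smul (by fun_prop)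
  · exact ((Real.continuous_sqrt.comp hd).continuousOn.inv₀
      fun A hA => (Real.sqrt_pos.2 (hpos A hA)).ne').smul hM.continuousOn

theorem exists_orthonormal_adaptedComplexStructure {A : ℂ →L[ℝ] E4} (hA : Function.Injective A) :
    ∃ e₁ e₂ : E4, e₁ ∈ (LinearMap.range (A : ℂ →ₗ[ℝ] E4))ᗮ ∧
      e₂ ∈ (LinearMap.range (A : ℂ →ₗ[ℝ] E4))ᗮ ∧ ‖e₁‖ = 1 ∧ ‖e₂‖ = 1 ∧ ⟪e₁, e₂⟫ = 0 ∧
      ⟪adaptedComplexStructure A e₁, e₂⟫ = 1 ∧ ⟪adaptedComplexStructure A e₁, e₁⟫ = 0 := by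
  have hu := inv_sqrt_sq_mul_cancel (gramDet_pos_of_injective hA)
  have : Nontrivial (LinearMap.range (A : ℂ →ₗ[ℝ] E4))ᗮ :=
    Module.nontrivial_of_finrank_eq_succ (finrank_orthogonal_range_eq_two hA)
  obtain ⟨⟨e, he⟩, hn⟩ := exists_norm_eq (LinearMap.range (A : ℂ →ₗ[ℝ] E4))ᗮ zero_le_one
  obtain ⟨ha, hb⟩ := (mem_orthogonal_range_iff _ e).1 he
  have hJn : ‖adaptedComplexStructure A e‖ = 1 := (norm_complexStructure hu ha hb).trans hn
  refine ⟨e, adaptedComplexStructure A e, he,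
    (isAdaptedComplexStructure_adaptedComplexStructure hA).mapsTo_orthogonal e he, hn, hJn, ?_,
    by rw [real_inner_self_eq_norm_sq, hJn, one_pow], inner_complexStructure_self ha hb⟩
  rw [real_inner_comm]
  exact inner_complexStructure_self ha hb

end Construction

/-- The map `Φ : 𝒜 → 𝒥`.  For every injective real-linear `A : ℂ → ℝ⁴` and
every oriented orthonormal basis `(e₁, e₂)` of `W = (im A)^⊥` there is a
unique complex structure `J` on `ℝ⁴` preserving the splitting
`ℝ⁴ = im A ⊕ W`, making `A` complex linear, and satisfying `⟨Je₁, e₂⟩ = 1`,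
`⟨Je₁, e₁⟩ = 0`.  Moreover the assignment `A ↦ Φ(A) = J` can be made into a
map, continuous on the set of injective `A`, with these properties. -/
theorem stmt15 :
    (∀ A : ℂ →L[ℝ] E4, Function.Injective A →
      ∀ e₁ e₂ : E4, e₁ ∈ (LinearMap.range (A : ℂ →ₗ[ℝ] E4))ᗮ → e₂ ∈ (LinearMap.range (A : ℂ →ₗ[ℝ] E4))ᗮ →
        ‖e₁‖ = 1 → ‖e₂‖ = 1 → (inner ℝ e₁ e₂ : ℝ) = 0 →
        ∃! J : E4 →L[ℝ] E4,
          (∀ v, J (J v) = -v) ∧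
          (∀ v ∈ LinearMap.range (A : ℂ →ₗ[ℝ] E4), J v ∈ LinearMap.range (A : ℂ →ₗ[ℝ] E4)) ∧
          (∀ w ∈ (LinearMap.range (A : ℂ →ₗ[ℝ] E4))ᗮ, J w ∈ (LinearMap.range (A : ℂ →ₗ[ℝ] E4))ᗮ) ∧
          (∀ z : ℂ, J (A z) = A (Complex.I * z)) ∧
          (inner ℝ (J e₁) e₂ : ℝ) = 1 ∧ (inner ℝ (J e₁) e₁ : ℝ) = 0) ∧
    ∃ Φ : (ℂ →L[ℝ] E4) → (E4 →L[ℝ] E4),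
      ContinuousOn Φ {A | Function.Injective A} ∧
      ∀ A : ℂ →L[ℝ] E4, Function.Injective A →
        (∀ v, Φ A (Φ A v) = -v) ∧
        (∀ v ∈ LinearMap.range (A : ℂ →ₗ[ℝ] E4), Φ A v ∈ LinearMap.range (A : ℂ →ₗ[ℝ] E4)) ∧
        (∀ w ∈ (LinearMap.range (A : ℂ →ₗ[ℝ] E4))ᗮ, Φ A w ∈ (LinearMap.range (A : ℂ →ₗ[ℝ] E4))ᗮ) ∧
        (∀ z : ℂ, Φ A (A z) = A (Complex.I * z)) ∧
        ∃ e₁ e₂ : E4, e₁ ∈ (LinearMap.range (A : ℂ →ₗ[ℝ] E4))ᗮ ∧ e₂ ∈ (LinearMap.range (A : ℂ →ₗ[ℝ] E4))ᗮ ∧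
          ‖e₁‖ = 1 ∧ ‖e₂‖ = 1 ∧ (inner ℝ e₁ e₂ : ℝ) = 0 ∧
          (inner ℝ (Φ A e₁) e₂ : ℝ) = 1 ∧ (inner ℝ (Φ A e₁) e₁ : ℝ) = 0 := by
  refine ⟨fun A hA e₁ e₂ he₁ he₂ hn₁ hn₂ h₁₂ => ?_, adaptedComplexStructure,
    continuousOn_adaptedComplexStructure, fun A hA => ?_⟩
  · have hW := finrank_orthogonal_range_eq_two hA
    have hon := orthonormal_pair_iff.2 ⟨hn₁, hn₂, h₁₂⟩
    obtain ⟨u, hu, hJe⟩ := exists_complexStructure_apply_eq hA he₁ he₂ hon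
    have hJ := isAdaptedComplexStructure_complexStructure hu
    refine ⟨complexStructure (A 1) (A Complex.I) u,
      ⟨hJ.apply_apply, hJ.mapsTo_range, hJ.mapsTo_orthogonal, hJ.map_I_mul, ?_, ?_⟩, ?_⟩
    · rw [hJe, real_inner_self_eq_norm_sq, hn₂, one_pow]
    · rw [hJe, real_inner_comm, h₁₂]
    · rintro K ⟨hK₁, hK₂, hK₃, hK₄, hK₅, hK₆⟩
      have hK : IsAdaptedComplexStructure A K := ⟨hK₁, hK₂, hK₃, hK₄⟩
      exact hK.ext_of_apply_eq hJ hW he₁ he₂ hon (hK.apply_eq_of_inner hW he₁ he₂ hon hK₅ hK₆) hJe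
  · have hJ := isAdaptedComplexStructure_adaptedComplexStructure hA
    exact ⟨hJ.apply_apply, hJ.mapsTo_range, hJ.mapsTo_orthogonal, hJ.map_I_mul,
      exists_orthonormal_adaptedComplexStructure hA⟩
end
end
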